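/- Let Z be a subset of ℝ^m, and suppose that Z × ℝ^n is a smooth submanifold of ℝ^{m+n} (in the sense that every point of Z × ℝ^n has an open neighborhood W in ℝ^{m+n} on which there is a smooth map φ : W → ℝ^d whose differential is surjective at every point of W and with (Z × ℝ^n) ∩ W = φ⁻¹(0)). Then Z is a smooth submanifold of ℝ^m in the same sense. -/

import Mathlib

/-- A subset `Z` of a real normed space (such as `ℝ^k`) is a smooth submanifold if for
every `z ∈ Z` there exist an open neighborhood `U` of `z`, a natural number `d`, and a
smooth map `φ : U → ℝ^d` whose differential is surjective at every point of `U`, such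
that `Z ∩ U = φ ⁻¹' {0} ∩ U`. -/
def IsSmoothSubmanifold {E : Type*} [NormedAddCommGroup E] [NormedSpace ℝ E]
    (Z : Set E) : Prop :=
  ∀ z ∈ Z, ∃ (U : Set E) (d : ℕ) (φ : E → (Fin d → ℝ)),
    IsOpen U ∧ z ∈ U ∧ ContDiffOn ℝ (⊤ : ℕ∞) φ U ∧
    (∀ x ∈ U, ∃ φ' : E →L[ℝ] (Fin d → ℝ), HasFDerivAt φ φ' x ∧ Function.Surjective φ') ∧
    Z ∩ U = φ ⁻¹' {0} ∩ U

/-- If `Z ⊆ ℝ^m` is such that `Z × ℝ^n` is a smooth submanifold of `ℝ^{m+n}`, then `Z`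
is a smooth submanifold of `ℝ^m`. -/
theorem isSmoothSubmanifold_of_prod {m n : ℕ} (Z : Set (Fin m → ℝ))
    (h : IsSmoothSubmanifold (Z ×ˢ (Set.univ : Set (Fin n → ℝ)))) :
    IsSmoothSubmanifold Z := by
  intro z hz
  obtain ⟨U, d, φ, hUopen, hzU, hφsmooth, hφderiv, hφzero⟩ :=
    h (z, (0 : Fin n → ℝ)) ⟨hz, trivial⟩
  set ι : (Fin m → ℝ) →L[ℝ] ((Fin m → ℝ) × (Fin n → ℝ)) :=
    ContinuousLinearMap.inl ℝ _ _ with hι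
  -- every HasFDerivAt derivative on U equals fderiv
  have hfd : ∀ x ∈ U, HasFDerivAt φ (fderiv ℝ φ x) x := by
    intro x hx
    obtain ⟨φ', hφ', -⟩ := hφderiv x hx
    rw [hφ'.fderiv]; exact hφ'
  -- the full derivative at (z,0) kills the second factor
  have hkill : (fderiv ℝ φ (z, 0)).comp (ContinuousLinearMap.inr ℝ (Fin m → ℝ) (Fin n → ℝ))
      = 0 := by
    have hinr : HasFDerivAt (fun y : Fin n → ℝ => ((z, y) : (Fin m → ℝ) × (Fin n → ℝ)))
        (ContinuousLinearMap.inr ℝ (Fin m → ℝ) (Fin n → ℝ)) 0 := by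
      have := HasFDerivAt.prodMk (hasFDerivAt_const (𝕜 := ℝ) z (0 : Fin n → ℝ)) (hasFDerivAt_id (𝕜 := ℝ) (0 : Fin n → ℝ))
      exact this
    have hcomp : HasFDerivAt (fun y : Fin n → ℝ => φ (z, y))
        ((fderiv ℝ φ (z, 0)).comp (ContinuousLinearMap.inr ℝ (Fin m → ℝ) (Fin n → ℝ))) 0 :=
      (hfd _ hzU).comp 0 hinr
    have heq : (fun y : Fin n → ℝ => φ (z, y)) =ᶠ[nhds (0 : Fin n → ℝ)] fun _ => 0 := by
      have hcont : Continuous (fun y : Fin n → ℝ => ((z, y) : (Fin m → ℝ) × (Fin n → ℝ))) := by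
        fun_prop
      have hmem : (fun y : Fin n → ℝ => ((z, y) : (Fin m → ℝ) × (Fin n → ℝ))) ⁻¹' U
          ∈ nhds (0 : Fin n → ℝ) := (hUopen.preimage hcont).mem_nhds hzU
      filter_upwards [hmem] with y hy
      have : ((z, y) : (Fin m → ℝ) × (Fin n → ℝ)) ∈ φ ⁻¹' {0} ∩ U := by
        rw [← hφzero]; exact ⟨⟨hz, trivial⟩, hy⟩
      simpa using this.1
    exact (hcomp.congr_of_eventuallyEq heq.symm).unique
      (hasFDerivAt_const (0 : Fin d → ℝ) (0 : Fin n → ℝ))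
  -- hence the restriction to the first factor is surjective at z
  set T : (Fin m → ℝ) →L[ℝ] (Fin d → ℝ) := (fderiv ℝ φ (z, 0)).comp ι with hT
  have hTsurj : Function.Surjective T := by
    obtain ⟨φ', hφ', hsurj⟩ := hφderiv _ hzU
    have hφ'eq : φ' = fderiv ℝ φ (z, 0) := hφ'.fderiv.symm
    intro y
    obtain ⟨⟨a, b⟩, hab⟩ := hsurj y
    refine ⟨a, ?_⟩
    have h1 : fderiv ℝ φ (z, 0) (a, b) = y := by rw [← hφ'eq]; exact hab
    have hsplit : ((a, b) : (Fin m → ℝ) × (Fin n → ℝ)) = (a, 0) + (0, b) := by simp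
    have h2 : fderiv ℝ φ (z, 0) ((a, 0) + (0, b)) = y := hsplit ▸ h1
    rw [map_add] at h2
    have h3 : fderiv ℝ φ (z, 0) ((0 : Fin m → ℝ), b) = 0 := by
      have := DFunLike.congr_fun hkill b
      simpa using this
    rw [h3, add_zero] at h2
    rw [hT]
    simpa [hι] using h2
  -- right inverse of T
  obtain ⟨g, hg⟩ := T.toLinearMap.exists_rightInverse_of_surjective
    (LinearMap.range_eq_top.mpr hTsurj)
  set S : (Fin d → ℝ) →L[ℝ] (Fin m → ℝ) := LinearMap.toContinuousLinearMap g with hS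
  have hTS : T.comp S = ContinuousLinearMap.id ℝ (Fin d → ℝ) := by
    apply ContinuousLinearMap.ext
    intro y
    have := LinearMap.congr_fun hg y
    simpa [hS] using this
  -- the good neighborhood
  set G : (Fin m → ℝ) → ((Fin d → ℝ) →L[ℝ] (Fin d → ℝ)) :=
    fun x => ((fderiv ℝ φ (x, 0)).comp ι).comp S with hG
  have hιcont : Continuous fun x : Fin m → ℝ => ((x, 0) : (Fin m → ℝ) × (Fin n → ℝ)) := by
    fun_prop
  set V : Set (Fin m → ℝ) :=
    (fun x : Fin m → ℝ => ((x, 0) : (Fin m → ℝ) × (Fin n → ℝ))) ⁻¹' U with hV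
  have hVopen : IsOpen V := hUopen.preimage hιcont
  have hGcont : ContinuousOn G V := by
    have h1 : ContinuousOn (fun x : Fin m → ℝ => fderiv ℝ φ (x, 0)) V := by
      have h2 := hφsmooth.continuousOn_fderiv_of_isOpen hUopen (by simp)
      exact h2.comp hιcont.continuousOn (fun x hx => hx)
    exact (h1.clm_comp continuousOn_const).clm_comp continuousOn_const
  set U' : Set (Fin m → ℝ) := V ∩ G ⁻¹' {A | IsUnit A} with hU'
  have hU'open : IsOpen U' := hGcont.isOpen_inter_preimage hVopen Units.isOpen
  have hzU' : z ∈ U' := by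
    refine ⟨hzU, ?_⟩
    show IsUnit (G z)
    have hGz : G z = ContinuousLinearMap.id ℝ (Fin d → ℝ) := hTS
    rw [hGz]; exact isUnit_one
  refine ⟨U', d, fun x => φ (x, 0), hU'open, hzU', ?_, ?_, ?_⟩
  · -- smoothness
    exact hφsmooth.comp ((contDiff_prodMk_left (0 : Fin n → ℝ)).contDiffOn)
      (fun x hx => hx.1)
  · -- surjective derivative
    intro x hx
    obtain ⟨hxV, hxG⟩ := hx
    refine ⟨(fderiv ℝ φ (x, 0)).comp ι, ?_, ?_⟩
    · have := (hfd _ hxV).comp x (ι.hasFDerivAt (x := x))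
      simpa [hι] using this
    · have hunit : IsUnit (G x) := hxG
      intro y
      obtain ⟨A, hA⟩ := hunit
      have hval : G x (A.inv y) = y := by
        have h1 : (G x) * A.inv = 1 := by rw [← hA]; exact A.mul_inv
        have := DFunLike.congr_fun h1 y
        simpa using this
      exact ⟨S (A.inv y), hval⟩
  · -- the zero set
    ext x
    simp only [Set.mem_inter_iff, Set.mem_preimage, Set.mem_singleton_iff]
    constructor
    · rintro ⟨hxZ, hxU'⟩
      refine ⟨?_, hxU'⟩
      have : ((x, (0 : Fin n → ℝ)) : (Fin m → ℝ) × (Fin n → ℝ)) ∈ φ ⁻¹' {0} ∩ U := by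
        rw [← hφzero]; exact ⟨⟨hxZ, trivial⟩, hxU'.1⟩
      simpa using this.1
    · rintro ⟨hφx, hxU'⟩
      refine ⟨?_, hxU'⟩
      have : ((x, (0 : Fin n → ℝ)) : (Fin m → ℝ) × (Fin n → ℝ))
          ∈ (Z ×ˢ (Set.univ : Set (Fin n → ℝ))) ∩ U := by
        rw [hφzero]; exact ⟨hφx, hxU'.1⟩
      exact this.1.1
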